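/- Let g ≥ 1 be an integer and q > 1 a real number. Write P_g(x,y,z,q) = Σ_{(a,b,c) ∈ ℤ³} C_{a,b,c} x^a y^b z^c with uniquely determined real coefficients C_{a,b,c}, all but finitely many equal to zero. Then C_{1, g−1, g−1} ≠ 0, and every (a,b,c) ≠ (1, g−1, g−1) with C_{a,b,c} ≠ 0 satisfies 2a + b + c < 2g; that is, x y^{g−1} z^{g−1} is the unique monomial of maximal weight in P_g, where the weight of x^a y^b z^c is 2a + b + c. -/

import Mathlib

/-- The `q`-integer `[m]_q = 1 + q + ⋯ + q^{m-1}`. -/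
noncomputable def qInt (q : ℝ) (m : ℕ) : ℝ := ∑ i ∈ Finset.range m, q ^ i

/-- The `q`-factorial `[m]!_q = [1]_q [2]_q ⋯ [m]_q`. -/
noncomputable def qFact (q : ℝ) (m : ℕ) : ℝ := ∏ i ∈ Finset.range m, qInt q (i + 1)

/-- The Laurent polynomial `P_g(x, y, z, q)` of display (5.1). -/
noncomputable def Pg (g : ℕ) (x y z q : ℝ) : ℝ :=
  (-1 : ℝ) ^ g * q ^ (-(g : ℤ)) *
      (y ^ (-(g : ℤ)) * z ^ (g : ℤ) * ∏ i ∈ Finset.Icc 1 g, (y * q ^ i - 1) +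
        y ^ (g : ℤ) * z ^ (-(g : ℤ)) * ∏ i ∈ Finset.Icc 1 g, (z * q ^ i - 1)) +
    ∑ t ∈ Finset.range g, ∑ u ∈ Finset.range g,
      if t + u ≤ g then
        (-1 : ℝ) ^ (t + u) * (qFact q g / (qFact q t * qFact q u * qFact q (g - t - u))) *
          y ^ ((u : ℤ) - t) * z ^ ((t : ℤ) - u) * q ^ ((t * u : ℤ) - t - u) *
          (x - y * q ^ t - z * q ^ u + 1) *
          (∏ i ∈ Finset.Icc 1 (g - t - 1), (z * q ^ i - 1)) *
          (∏ i ∈ Finset.Icc 1 (g - u - 1), (y * q ^ i - 1))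
      else 0

/-!
Substituting `(x, y, z) ↦ (s²x, sy, sz)` multiplies a monomial of weight `w` by `s ^ w`. It also
turns `P_g` into a polynomial in `s` of degree at most `2g`: the Laurent factors `y^{u-t} z^{t-u}`
and `y^{∓g} z^{±g}` have weight zero, the `(t, u)` summand has degree `2 + (g-t-1) + (g-u-1)`,
and only the `(0, 0)` summand reaches degree `2g`, with leading coefficient
`q^{g(g-1)} x y^{g-1} z^{g-1}`. Comparing coefficients first of the powers of `s`, then of the
monomials in `x, y, z` (in both cases distinct characters of a group of units, hence linearly
independent by Dedekind's lemma) identifies the part of weight `≥ 2g` of any Laurent expansion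
of `P_g`.
-/

open Polynomial Finset

section
variable {K : Type*} [Field K] [LinearOrder K] [IsStrictOrderedRing K]

def unitsZPowHom (k : ℤ) : Kˣ →* K := (Units.coeHom K).comp (zpowGroupHom k)

theorem linearIndependent_zpow_units :
    LinearIndependent K (fun (k : ℤ) (s : Kˣ) => (s : K) ^ k) := by
  have hχ : Function.Injective (unitsZPowHom (K := K)) := fun a b h => by
    simpa [unitsZPowHom] using DFunLike.congr_fun h (Units.mk0 2 two_ne_zero)
  simpa [Function.comp_def, unitsZPowHom] using (linearIndependent_monoidHom Kˣ K).comp _ hχ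

theorem linearIndependent_monomial_units :
    LinearIndependent K (fun (p : ℤ × ℤ × ℤ) (v : Kˣ × Kˣ × Kˣ) =>
      (v.1 : K) ^ p.1 * (v.2.1 : K) ^ p.2.1 * (v.2.2 : K) ^ p.2.2) := by
  let μ : ℤ × ℤ × ℤ → (Kˣ × Kˣ × Kˣ →* K) := fun p =>
    (unitsZPowHom p.1).comp (MonoidHom.fst _ _) *
      (unitsZPowHom p.2.1).comp ((MonoidHom.fst _ _).comp (MonoidHom.snd _ _)) *
      (unitsZPowHom p.2.2).comp ((MonoidHom.snd _ _).comp (MonoidHom.snd _ _))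
  have hμ : Function.Injective μ := by
    rintro ⟨a, b, c⟩ ⟨a', b', c'⟩ h
    let two := Units.mk0 (2 : K) two_ne_zero
    have ha : a = a' := by simpa [μ, unitsZPowHom, two] using DFunLike.congr_fun h (two, 1, 1)
    have hb : b = b' := by simpa [μ, unitsZPowHom, two] using DFunLike.congr_fun h (1, two, 1)
    have hc : c = c' := by simpa [μ, unitsZPowHom, two] using DFunLike.congr_fun h (1, 1, two)
    rw [ha, hb, hc]
  have hμ_apply : (fun p => ⇑(μ p)) = fun (p : ℤ × ℤ × ℤ) (v : Kˣ × Kˣ × Kˣ) =>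
      (v.1 : K) ^ p.1 * (v.2.1 : K) ^ p.2.1 * (v.2.2 : K) ^ p.2.2 := by
    funext p v
    simp [μ, unitsZPowHom]
  exact hμ_apply ▸ (linearIndependent_monoidHom _ K).comp μ hμ

theorem sum_filter_exponent_eq_coeff {ι : Type*} (S : Finset ι) (c : ι → K) (w : ι → ℤ)
    (L : K[X]) (h : ∀ s : K, s ≠ 0 → ∑ i ∈ S, c i * s ^ w i = L.eval s) (n : ℕ) :
    ∑ i ∈ S with w i = n, c i = L.coeff n := by
  set F : ℤ →₀ K := ∑ i ∈ S, Finsupp.single (w i) (c i)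
  set G : ℤ →₀ K := ∑ m ∈ range (L.natDegree + 1), Finsupp.single (m : ℤ) (L.coeff m)
  have hFG : F = G := by
    apply linearIndependent_zpow_units.finsuppLinearCombination_injective
    funext s
    simpa [F, G, Finsupp.linearCombination_single, eval_eq_sum_range] using h s s.ne_zero
  have := DFunLike.congr_fun hFG (n : ℤ)
  simp only [F, G, Finsupp.finsetSum_apply, Finsupp.single_apply, Nat.cast_inj, sum_ite_eq',
    mem_range, Order.lt_add_one_iff] at this
  rw [Finset.sum_filter, this, ite_eq_left_iff]
  exact fun hn => (coeff_eq_zero_of_natDegree_lt (not_le.mp hn)).symm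

theorem eq_of_forall_sum_monomial_eq {D E : (ℤ × ℤ × ℤ) →₀ K}
    (h : ∀ x y z : K, x ≠ 0 → y ≠ 0 → z ≠ 0 →
      D.sum (fun p a => a * x ^ p.1 * y ^ p.2.1 * z ^ p.2.2) =
        E.sum (fun p a => a * x ^ p.1 * y ^ p.2.1 * z ^ p.2.2)) :
    D = E := by
  apply linearIndependent_monomial_units.finsuppLinearCombination_injective
  funext v
  simpa [Finsupp.linearCombination_apply, Finsupp.sum, Finset.sum_apply, mul_assoc] using
    h v.1 v.2.1 v.2.2 v.1.ne_zero v.2.1.ne_zero v.2.2.ne_zero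

end

theorem mul_zpow_mul_mul_zpow_of_add_eq_zero {K : Type*} [Field K] {s : K} (hs : s ≠ 0) (y z : K)
    {a b : ℤ} (hab : a + b = 0) :
    (s * y) ^ a * (s * z) ^ b = y ^ a * z ^ b := by
  rw [mul_zpow, mul_zpow, mul_mul_mul_comm, ← zpow_add₀ hs, hab, zpow_zero, one_mul]

def weight (p : ℤ × ℤ × ℤ) : ℤ := 2 * p.1 + p.2.1 + p.2.2

theorem monomial_weighted_scale {K : Type*} [Field K] {s : K} (hs : s ≠ 0) (x y z : K)
    (p : ℤ × ℤ × ℤ) :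
    (s ^ 2 * x) ^ p.1 * (s * y) ^ p.2.1 * (s * z) ^ p.2.2 =
      s ^ weight p * (x ^ p.1 * y ^ p.2.1 * z ^ p.2.2) := by
  rw [weight, zpow_add₀ hs, zpow_add₀ hs, zpow_mul, mul_zpow, mul_zpow, mul_zpow]
  norm_cast
  ring

section
variable {R : Type*} [CommRing R]

noncomputable def qProdPoly (a q : R) (n : ℕ) : R[X] := ∏ i ∈ Icc 1 n, (C (a * q ^ i) * X - 1)

theorem eval_qProdPoly (a q s : R) (n : ℕ) :
    (qProdPoly a q n).eval s = ∏ i ∈ Icc 1 n, (s * a * q ^ i - 1) := by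
  simp only [qProdPoly, eval_prod, eval_sub, eval_mul, eval_C, eval_X, eval_one]
  exact prod_congr rfl fun i _ => by ring

theorem natDegree_qProdPoly_le (a q : R) (n : ℕ) : (qProdPoly a q n).natDegree ≤ n := by
  have hlin : ∀ c : R, (C c * X - 1).natDegree ≤ 1 := fun c => by compute_degree
  unfold qProdPoly
  refine (natDegree_prod_le _ _).trans ((sum_le_sum fun i _ => hlin (a * q ^ i)).trans ?_)
  simp

theorem coeff_qProdPoly_self (a q : R) (n : ℕ) :
    (qProdPoly a q n).coeff n = a ^ n * ∏ i ∈ Icc 1 n, q ^ i := by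
  have h := coeff_prod_of_natDegree_le (s := Icc 1 n) (fun i => C (a * q ^ i) * X - 1) 1
    fun i _ => by compute_degree
  simp only [Nat.card_Icc, add_tsub_cancel_right, mul_one, coeff_sub, coeff_C_mul_X, coeff_one,
    if_true, one_ne_zero, if_false, sub_zero] at h
  rw [qProdPoly, h, prod_mul_distrib, prod_const, Nat.card_Icc, add_tsub_cancel_right]

end

theorem qFact_pos {q : ℝ} (hq : 0 < q) (m : ℕ) : 0 < qFact q m :=
  prod_pos fun i _ => sum_pos (fun j _ => pow_pos hq j) (nonempty_range_iff.mpr i.succ_ne_zero)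

noncomputable def PgPolyTerm (g : ℕ) (x y z q : ℝ) (t u : ℕ) : ℝ[X] :=
  if t + u ≤ g then
    C ((-1 : ℝ) ^ (t + u) * (qFact q g / (qFact q t * qFact q u * qFact q (g - t - u))) *
        y ^ ((u : ℤ) - t) * z ^ ((t : ℤ) - u) * q ^ ((t * u : ℤ) - t - u)) *
      (C x * X ^ 2 - C (y * q ^ t) * X - C (z * q ^ u) * X + 1) *
      qProdPoly z q (g - t - 1) * qProdPoly y q (g - u - 1)
  else 0

noncomputable def PgPoly (g : ℕ) (x y z q : ℝ) : ℝ[X] :=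
  C ((-1 : ℝ) ^ g * q ^ (-(g : ℤ))) *
      (C (y ^ (-(g : ℤ)) * z ^ (g : ℤ)) * qProdPoly y q g +
        C (y ^ (g : ℤ) * z ^ (-(g : ℤ))) * qProdPoly z q g) +
    ∑ t ∈ range g, ∑ u ∈ range g, PgPolyTerm g x y z q t u

theorem eval_PgPoly (g : ℕ) (x y z q : ℝ) {s : ℝ} (hs : s ≠ 0) :
    (PgPoly g x y z q).eval s = Pg g (s ^ 2 * x) (s * y) (s * z) q := by
  simp only [PgPoly, PgPolyTerm, Pg, eval_add, eval_mul, eval_C, eval_finsetSum, eval_sub, eval_X,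
    eval_one, eval_pow, apply_ite (eval s), eval_zero, eval_qProdPoly]
  rw [mul_zpow_mul_mul_zpow_of_add_eq_zero hs y z (neg_add_cancel _),
    mul_zpow_mul_mul_zpow_of_add_eq_zero hs y z (add_neg_cancel _)]
  congr 1
  refine sum_congr rfl fun t _ => sum_congr rfl fun u _ => ?_
  split_ifs
  · rw [mul_assoc _ ((s * y) ^ _), mul_zpow_mul_mul_zpow_of_add_eq_zero hs y z (by ring)]
    ring
  · rfl

theorem natDegree_PgPolyTerm_le (g : ℕ) (x y z q : ℝ) (t u : ℕ) :
    (PgPolyTerm g x y z q t u).natDegree ≤ 2 + (g - t - 1) + (g - u - 1) := by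
  unfold PgPolyTerm
  split_ifs
  · refine natDegree_mul_le_of_le (natDegree_mul_le_of_le ?_ (natDegree_qProdPoly_le _ _ _))
      (natDegree_qProdPoly_le _ _ _)
    compute_degree
  · simp

theorem coeff_PgPolyTerm_zero_zero {g : ℕ} (hg : 1 ≤ g) (x y z : ℝ) {q : ℝ} (hq : 0 < q) :
    (PgPolyTerm g x y z q 0 0).coeff (2 * g) =
      (∏ i ∈ Icc 1 (g - 1), q ^ i) ^ 2 * (x * y ^ (g - 1) * z ^ (g - 1)) := by
  have hquad :
      (C x * X ^ 2 - C (y * q ^ 0) * X - C (z * q ^ 0) * X + 1 : ℝ[X]).natDegree ≤ 2 := by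
    compute_degree
  rw [show 2 * g = 2 + (g - 1) + (g - 1) by omega, PgPolyTerm, if_pos (Nat.zero_le g)]
  simp only [Nat.sub_zero]
  rw [coeff_mul_add_eq_of_natDegree_le
      (natDegree_mul_le_of_le (natDegree_C_mul_le _ _ |>.trans hquad)
        (natDegree_qProdPoly_le _ _ _))
      (natDegree_qProdPoly_le _ _ _),
    coeff_mul_add_eq_of_natDegree_le (natDegree_C_mul_le _ _ |>.trans hquad)
      (natDegree_qProdPoly_le _ _ _), coeff_C_mul]
  simp only [add_zero, pow_zero, show qFact q 0 = 1 from prod_range_zero _, mul_one, one_mul,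
    CharP.cast_eq_zero, sub_self, zpow_ofNat, mul_zero, coeff_add, coeff_sub, coeff_C_mul,
    coeff_X_pow, ↓reduceIte, coeff_mul_X, coeff_C_succ, sub_zero, coeff_one, OfNat.ofNat_ne_zero,
    coeff_qProdPoly_self]
  rw [div_self (qFact_pos hq g).ne']
  ring

theorem natDegree_C_mul_qProdPoly_add_le (c d e a b q : ℝ) (n : ℕ) :
    (C c * (C d * qProdPoly a q n + C e * qProdPoly b q n)).natDegree ≤ n :=
  natDegree_C_mul_le _ _ |>.trans <| natDegree_add_le_of_degree_le
    (natDegree_C_mul_le _ _ |>.trans (natDegree_qProdPoly_le _ _ _))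
    (natDegree_C_mul_le _ _ |>.trans (natDegree_qProdPoly_le _ _ _))

theorem natDegree_PgPoly_le (g : ℕ) (x y z q : ℝ) : (PgPoly g x y z q).natDegree ≤ 2 * g := by
  refine natDegree_add_le_of_degree_le
    ((natDegree_C_mul_qProdPoly_add_le ..).trans (by omega)) ?_
  refine natDegree_sum_le_of_forall_le _ _ fun t ht =>
    natDegree_sum_le_of_forall_le _ _ fun u hu => ?_
  rw [mem_range] at ht hu
  exact (natDegree_PgPolyTerm_le ..).trans (by omega)

theorem coeff_PgPoly_two_mul {g : ℕ} (hg : 1 ≤ g) (x y z : ℝ) {q : ℝ} (hq : 0 < q) :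
    (PgPoly g x y z q).coeff (2 * g) =
      (∏ i ∈ Icc 1 (g - 1), q ^ i) ^ 2 * (x * y ^ (g - 1) * z ^ (g - 1)) := by
  have hterm : ∀ t < g, ∀ u < g, t ≠ 0 ∨ u ≠ 0 →
      (PgPolyTerm g x y z q t u).coeff (2 * g) = 0 :=
    fun t ht u hu htu => coeff_eq_zero_of_natDegree_lt <|
      (natDegree_PgPolyTerm_le ..).trans_lt (by omega)
  have hg0 : 0 ∈ range g := mem_range.mpr hg
  rw [PgPoly, coeff_add, coeff_eq_zero_of_natDegree_lt
      ((natDegree_C_mul_qProdPoly_add_le ..).trans_lt (by omega)), zero_add, finsetSum_coeff,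
    sum_eq_single_of_mem 0 hg0, finsetSum_coeff, sum_eq_single_of_mem 0 hg0,
    coeff_PgPolyTerm_zero_zero hg x y z hq]
  · exact fun u hu hu0 => hterm 0 hg u (mem_range.mp hu) (Or.inr hu0)
  · intro t ht ht0
    rw [finsetSum_coeff]
    exact sum_eq_zero fun u hu => hterm t (mem_range.mp ht) u (mem_range.mp hu) (Or.inl ht0)

def IsLaurentExpansion (f : ℝ → ℝ → ℝ → ℝ) (C : (ℤ × ℤ × ℤ) →₀ ℝ) : Prop :=
  ∀ x y z : ℝ, x ≠ 0 → y ≠ 0 → z ≠ 0 →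
    f x y z = ∑ p ∈ C.support, C p * x ^ p.1 * y ^ p.2.1 * z ^ p.2.2

theorem sum_filter_weight_eq_coeff_PgPoly {g : ℕ} {q : ℝ} {C : (ℤ × ℤ × ℤ) →₀ ℝ}
    (hC : IsLaurentExpansion (fun x y z => Pg g x y z q) C)
    {x y z : ℝ} (hx : x ≠ 0) (hy : y ≠ 0) (hz : z ≠ 0) (n : ℕ) :
    ∑ p ∈ C.support with weight p = n, C p * x ^ p.1 * y ^ p.2.1 * z ^ p.2.2 =
      (PgPoly g x y z q).coeff n := by
  refine sum_filter_exponent_eq_coeff _ _ weight _ (fun s hs => ?_) n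
  rw [eval_PgPoly g x y z q hs]
  refine Eq.trans ?_ (hC _ _ _ (by positivity) (mul_ne_zero hs hy) (mul_ne_zero hs hz)).symm
  refine sum_congr rfl fun p _ => ?_
  linear_combination C p * (monomial_weighted_scale hs x y z p).symm

theorem Pg_filter_weight_eq {g : ℕ} (hg : 1 ≤ g) {q : ℝ} (hq : 0 < q)
    {C : (ℤ × ℤ × ℤ) →₀ ℝ} (hC : IsLaurentExpansion (fun x y z => Pg g x y z q) C)
    {n : ℕ} (hn : 2 * g ≤ n) :
    C.filter (fun p => weight p = n) =
      if n = 2 * g then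
        Finsupp.single (1, (g : ℤ) - 1, (g : ℤ) - 1) ((∏ i ∈ Icc 1 (g - 1), q ^ i) ^ 2)
      else 0 := by
  refine eq_of_forall_sum_monomial_eq fun x y z hx hy hz => ?_
  rw [Finsupp.sum_filter_index, Finsupp.support_filter,
    sum_filter_weight_eq_coeff_PgPoly hC hx hy hz]
  split_ifs with h2g
  · rw [h2g, coeff_PgPoly_two_mul hg x y z hq, Finsupp.sum_single_index (by simp)]
    simp only [zpow_one, show (g : ℤ) - 1 = ((g - 1 : ℕ) : ℤ) by omega, zpow_natCast]
    ring
  · rw [coeff_eq_zero_of_natDegree_lt ((natDegree_PgPoly_le ..).trans_lt (by omega)),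
      Finsupp.sum_zero_index]

theorem Pg_coeff_eq_of_two_mul_le_weight {g : ℕ} (hg : 1 ≤ g) {q : ℝ} (hq : 0 < q)
    {C : (ℤ × ℤ × ℤ) →₀ ℝ} (hC : IsLaurentExpansion (fun x y z => Pg g x y z q) C)
    {p : ℤ × ℤ × ℤ} (hp : 2 * g ≤ weight p) :
    C p = if p = (1, (g : ℤ) - 1, (g : ℤ) - 1) then (∏ i ∈ Icc 1 (g - 1), q ^ i) ^ 2
      else 0 := by
  obtain ⟨n, hn⟩ : ∃ n : ℕ, weight p = n := ⟨_, (Int.toNat_of_nonneg (by omega)).symm⟩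
  have h := DFunLike.congr_fun (Pg_filter_weight_eq hg hq hC (n := n) (by omega)) p
  rw [Finsupp.filter_apply_pos (fun p => weight p = n) _ hn] at h
  rw [h]
  by_cases h2g : n = 2 * g
  · rw [if_pos h2g, Finsupp.single_apply]
    simp only [eq_comm]
  · have hp₀ : p ≠ (1, (g : ℤ) - 1, (g : ℤ) - 1) := by
      rintro rfl
      simp only [weight] at hn
      omega
    rw [if_neg h2g, if_neg hp₀, Finsupp.coe_zero, Pi.zero_apply]

/-- Proposition 5.5: `x y^{g-1} z^{g-1}` is the unique monomial of maximal weight in the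
Laurent polynomial `P_g`, where the weight of `x^a y^b z^c` is `2a + b + c`: for any
finitely supported family of Laurent coefficients representing `P_g`, the coefficient of
`(1, g−1, g−1)` is nonzero and every other monomial with nonzero coefficient has weight
less than `2g`. -/
theorem Pg_unique_max_weight_monomial
    (g : ℕ) (hg : 1 ≤ g) (q : ℝ) (hq : 1 < q) (C : (ℤ × ℤ × ℤ) →₀ ℝ)
    (hC : ∀ x y z : ℝ, x ≠ 0 → y ≠ 0 → z ≠ 0 →
      Pg g x y z q = ∑ p ∈ C.support, C p * x ^ p.1 * y ^ p.2.1 * z ^ p.2.2) :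
    C (1, (g : ℤ) - 1, (g : ℤ) - 1) ≠ 0 ∧
      ∀ p : ℤ × ℤ × ℤ, p ≠ (1, (g : ℤ) - 1, (g : ℤ) - 1) → C p ≠ 0 →
        2 * p.1 + p.2.1 + p.2.2 < 2 * (g : ℤ) := by
  refine ⟨?_, fun p hp hCp => ?_⟩
  · rw [Pg_coeff_eq_of_two_mul_le_weight hg (by linarith) hC (by simp only [weight]; omega),
      if_pos rfl]
    positivity
  · by_contra! hlt
    exact hCp (by rw [Pg_coeff_eq_of_two_mul_le_weight hg (by linarith) hC hlt, if_neg hp])
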